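/- Let ν, μ be real numbers with ν > -1 and μ > -1, and let b > 0. Then ∫₀¹ x^{ν+1}(1-x²)^μ J_ν(bx) dx = 2^μ Γ(μ+1) b^{-(μ+1)} J_{ν+μ+1}(b), where J_ν is the Bessel function of the first kind of order ν. -/

import Mathlib

/-!
Expanding `J_ν(bx)` in its power series, the `n`-th term of the integrand is a constant times
`x ^ (2(n+ν+1)-1) (1-x²)^μ`. After `u = x²` its integral over `(0,1)` is half the Beta integral
`B(n+ν+1, μ+1) = Γ(n+ν+1) Γ(μ+1) / Γ(n+ν+μ+2)`; the factor `Γ(n+ν+1)` cancels the one in the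
coefficient, and what remains is `2^μ Γ(μ+1) b^(-(μ+1))` times the `n`-th term of `J_{ν+μ+1}(b)`.
On `(0,1)` the `n`-th term has constant sign `(-1)^n`, so the integrals of the absolute values are
the absolute values of the terms of `J_{ν+μ+1}(b)`; these are summable, which justifies integrating
termwise.
-/

open Real MeasureTheory

/-- Bessel function of the first kind of order `ν`. -/
noncomputable def besselJ (ν x : ℝ) : ℝ :=
  ∑' n : ℕ, (-1) ^ n * (x / 2) ^ (2 * (n:ℝ) + ν) /
    ((n.factorial : ℝ) * Real.Gamma ((n:ℝ) + ν + 1))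

open Set

section Beta

variable {a c : ℝ}

lemma ofReal_rpow_mul_one_sub_rpow {x : ℝ} (hx : x ∈ Ioc 0 1) :
    ((x ^ (a - 1) * (1 - x) ^ (c - 1) : ℝ) : ℂ)
      = (x : ℂ) ^ ((a : ℂ) - 1) * (1 - (x : ℂ)) ^ ((c : ℂ) - 1) := by
  rw [Complex.ofReal_mul, Complex.ofReal_cpow hx.1.le, Complex.ofReal_cpow (by linarith [hx.2])]
  push_cast; rfl

lemma integrableOn_rpow_mul_one_sub_rpow (ha : 0 < a) (hc : 0 < c) :
    IntegrableOn (fun x : ℝ => x ^ (a - 1) * (1 - x) ^ (c - 1)) (Ioo 0 1) := by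
  have h := Complex.betaIntegral_convergent (u := a) (v := c) (by simpa) (by simpa)
  rw [intervalIntegrable_iff_integrableOn_Ioc_of_le zero_le_one] at h
  refine (IntegrableOn.congr_fun h.re (fun x hx => ?_) measurableSet_Ioc).mono_set
    Ioo_subset_Ioc_self
  simp only [← ofReal_rpow_mul_one_sub_rpow hx, RCLike.re_to_complex, Complex.ofReal_re]

lemma integral_rpow_mul_one_sub_rpow (ha : 0 < a) (hc : 0 < c) :
    ∫ x in Ioo 0 1, x ^ (a - 1) * (1 - x) ^ (c - 1) = Gamma a * Gamma c / Gamma (a + c) := by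
  have hbeta : Complex.betaIntegral a c
      = ((∫ x in Ioo 0 1, x ^ (a - 1) * (1 - x) ^ (c - 1) : ℝ) : ℂ) := by
    rw [Complex.betaIntegral, intervalIntegral.integral_of_le zero_le_one,
      integral_Ioc_eq_integral_Ioo, ← integral_complex_ofReal]
    exact setIntegral_congr_fun measurableSet_Ioo
      fun x hx => (ofReal_rpow_mul_one_sub_rpow (Ioo_subset_Ioc_self hx)).symm
  have h := Complex.betaIntegral_eq_Gamma_mul_div a c (by simpa) (by simpa)
  rw [hbeta, ← Complex.ofReal_add, Complex.Gamma_ofReal, Complex.Gamma_ofReal,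
    Complex.Gamma_ofReal] at h
  exact_mod_cast h

end Beta

section Substitution

lemma image_sq_Ioo_zero_one : (fun x : ℝ => x ^ 2) '' Ioo 0 1 = Ioo 0 1 := by
  ext u
  constructor
  · rintro ⟨x, ⟨hx0, hx1⟩, rfl⟩
    exact ⟨by positivity, by nlinarith⟩
  · rintro ⟨hu0, hu1⟩
    exact ⟨√u, ⟨sqrt_pos.2 hu0, (sqrt_lt' one_pos).2 (by simpa using hu1)⟩, sq_sqrt hu0.le⟩

lemma injOn_sq_Ioo_zero_one : InjOn (fun x : ℝ => x ^ 2) (Ioo 0 1) :=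
  (pow_left_strictMonoOn₀ two_ne_zero).injOn.mono fun _ hx => le_of_lt hx.1

lemma hasDerivWithinAt_sq (s : Set ℝ) (x : ℝ) :
    HasDerivWithinAt (fun x : ℝ => x ^ 2) (2 * x) s x := by
  simpa using (hasDerivAt_pow 2 x).hasDerivWithinAt

variable {E : Type*} [NormedAddCommGroup E] [NormedSpace ℝ E]

lemma abs_deriv_smul_comp_sq_eqOn (g : ℝ → E) :
    EqOn (fun x => |2 * x| • g (x ^ 2)) (fun x => (2 * x) • g (x ^ 2)) (Ioo 0 1) :=
  fun x hx => by simp only [abs_of_pos (by linarith [hx.1] : (0 : ℝ) < 2 * x)]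

lemma integrableOn_Ioo_zero_one_iff_comp_sq (g : ℝ → E) :
    IntegrableOn g (Ioo 0 1) ↔ IntegrableOn (fun x => (2 * x) • g (x ^ 2)) (Ioo 0 1) := by
  conv_lhs => rw [← image_sq_Ioo_zero_one]
  rw [integrableOn_image_iff_integrableOn_abs_deriv_smul measurableSet_Ioo
    (fun x _ => hasDerivWithinAt_sq _ x) injOn_sq_Ioo_zero_one]
  exact integrableOn_congr_fun (abs_deriv_smul_comp_sq_eqOn g) measurableSet_Ioo

lemma integral_Ioo_zero_one_comp_sq (g : ℝ → E) :
    ∫ u in Ioo 0 1, g u = ∫ x in Ioo 0 1, (2 * x) • g (x ^ 2) := by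
  conv_lhs => rw [← image_sq_Ioo_zero_one]
  rw [integral_image_eq_integral_abs_deriv_smul measurableSet_Ioo
    (fun x _ => hasDerivWithinAt_sq _ x) injOn_sq_Ioo_zero_one]
  exact setIntegral_congr_fun measurableSet_Ioo (abs_deriv_smul_comp_sq_eqOn g)

end Substitution

section Moments

variable {a μ : ℝ}

lemma two_mul_smul_rpow_sq_eqOn :
    EqOn (fun x : ℝ => (2 * x) • ((x ^ 2) ^ (a - 1) * (1 - x ^ 2) ^ (μ + 1 - 1)))
      (fun x => 2 * (x ^ (2 * a - 1) * (1 - x ^ 2) ^ μ)) (Ioo 0 1) := by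
  intro x hx
  have hx0 : 0 < x := hx.1
  have hpow : x * (x ^ 2) ^ (a - 1) = x ^ (2 * a - 1) := by
    rw [← rpow_natCast, ← rpow_mul hx0.le,
      show 2 * a - 1 = 1 + (2 : ℕ) * (a - 1) by push_cast; ring, rpow_add hx0, rpow_one]
  simp only [smul_eq_mul, add_sub_cancel_right, ← hpow]
  ring

lemma integrableOn_rpow_mul_one_sub_sq_rpow (ha : 0 < a) (hμ : -1 < μ) :
    IntegrableOn (fun x : ℝ => x ^ (2 * a - 1) * (1 - x ^ 2) ^ μ) (Ioo 0 1) := by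
  have h := (integrableOn_Ioo_zero_one_iff_comp_sq _).1
    (integrableOn_rpow_mul_one_sub_rpow ha (c := μ + 1) (by linarith))
  rw [integrableOn_congr_fun two_mul_smul_rpow_sq_eqOn measurableSet_Ioo] at h
  exact (integrable_const_mul_iff (isUnit_iff_ne_zero.2 two_ne_zero) _).1 h

lemma integral_rpow_mul_one_sub_sq_rpow (ha : 0 < a) (hμ : -1 < μ) :
    ∫ x in Ioo 0 1, x ^ (2 * a - 1) * (1 - x ^ 2) ^ μ
      = Gamma a * Gamma (μ + 1) / (2 * Gamma (a + μ + 1)) := by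
  have h := integral_rpow_mul_one_sub_rpow ha (c := μ + 1) (by linarith)
  rw [integral_Ioo_zero_one_comp_sq,
    setIntegral_congr_fun measurableSet_Ioo two_mul_smul_rpow_sq_eqOn, integral_const_mul,
    ← add_assoc] at h
  linear_combination h / 2

end Moments

noncomputable def besselJTerm (ν x : ℝ) (n : ℕ) : ℝ :=
  (-1) ^ n * (x / 2) ^ (2 * (n : ℝ) + ν) / ((n.factorial : ℝ) * Gamma ((n : ℝ) + ν + 1))

lemma besselJ_eq_tsum_besselJTerm (ν x : ℝ) : besselJ ν x = ∑' n, besselJTerm ν x n := rfl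

section BesselTerms

variable {ν μ b x : ℝ}

lemma natCast_add_add_one_pos (hν : -1 < ν) (n : ℕ) : 0 < (n : ℝ) + ν + 1 := by
  linarith [Nat.cast_nonneg (α := ℝ) n]

lemma besselJTerm_mul (hb : 0 ≤ b) (hx : 0 ≤ x) (n : ℕ) :
    besselJTerm ν (b * x) n = besselJTerm ν b n * x ^ (2 * (n : ℝ) + ν) := by
  rw [besselJTerm, besselJTerm, mul_div_right_comm b, mul_rpow (by positivity) hx]
  ring

lemma norm_besselJTerm (hν : -1 < ν) (hx : 0 < x) (n : ℕ) :
    ‖besselJTerm ν x n‖ = (-1) ^ n * besselJTerm ν x n := by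
  have hΓ : 0 < Gamma ((n : ℝ) + ν + 1) := Gamma_pos_of_pos (natCast_add_add_one_pos hν n)
  rw [besselJTerm, mul_div_assoc, norm_mul, norm_pow, norm_neg, norm_one, one_pow, one_mul,
    Real.norm_of_nonneg (by positivity), ← mul_assoc, ← mul_pow, neg_one_mul, neg_neg, one_pow,
    one_mul]

lemma summable_norm_besselJTerm (hx : 0 < x) : Summable fun n => ‖besselJTerm ν x n‖ := by
  refine Summable.of_norm_bounded_eventually_nat
    ((Real.summable_pow_div_factorial ((x / 2) ^ 2)).mul_left ((x / 2) ^ ν)) ?_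
  filter_upwards [Filter.eventually_ge_atTop ⌈1 - ν⌉₊] with n hn
  have hn' : 2 ≤ (n : ℝ) + ν + 1 := by linarith [Nat.ceil_le.1 hn]
  have hΓ : 1 ≤ Gamma ((n : ℝ) + ν + 1) :=
    Gamma_two.symm.le.trans (Gamma_strictMonoOn_Ici.monotoneOn self_mem_Ici hn' hn')
  have hsplit : (x / 2) ^ (2 * (n : ℝ) + ν) = (x / 2) ^ ν * ((x / 2) ^ 2) ^ n := by
    rw [rpow_add (by positivity), ← pow_mul, ← rpow_natCast, mul_comm]
    push_cast
    ring_nf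
  rw [norm_norm, besselJTerm, norm_div, norm_mul, norm_pow, norm_neg, norm_one, one_pow, one_mul,
    norm_mul, Real.norm_of_nonneg (by positivity), hsplit, RCLike.norm_natCast,
    Real.norm_of_nonneg (zero_le_one.trans hΓ), ← mul_div_assoc]
  exact div_le_div_of_nonneg_left (by positivity) (by positivity)
    (le_mul_of_one_le_right (by positivity) hΓ)

lemma mul_besselJTerm_comp_mul_eqOn (hb : 0 ≤ b) (n : ℕ) :
    EqOn (fun x => x ^ (ν + 1) * (1 - x ^ 2) ^ μ * besselJTerm ν (b * x) n)
      (fun x => besselJTerm ν b n * (x ^ (2 * ((n : ℝ) + ν + 1) - 1) * (1 - x ^ 2) ^ μ))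
      (Ioo 0 1) := by
  intro x hx
  have hpow : x ^ (ν + 1) * x ^ (2 * (n : ℝ) + ν) = x ^ (2 * ((n : ℝ) + ν + 1) - 1) := by
    rw [← rpow_add hx.1]
    ring_nf
  simp only [besselJTerm_mul hb hx.1.le, ← hpow]
  ring

lemma integrableOn_mul_besselJTerm_comp_mul (hν : -1 < ν) (hμ : -1 < μ) (hb : 0 ≤ b) (n : ℕ) :
    IntegrableOn (fun x => x ^ (ν + 1) * (1 - x ^ 2) ^ μ * besselJTerm ν (b * x) n) (Ioo 0 1) := by
  rw [integrableOn_congr_fun (mul_besselJTerm_comp_mul_eqOn hb n) measurableSet_Ioo]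
  exact (integrableOn_rpow_mul_one_sub_sq_rpow (natCast_add_add_one_pos hν n) hμ).const_mul _

lemma two_rpow_mul_rpow_neg_mul_half_rpow (hb : 0 < b) (μ : ℝ) :
    2 ^ μ * b ^ (-(μ + 1)) * (b / 2) ^ (μ + 1) = 1 / 2 := by
  rw [div_rpow hb.le zero_le_two, rpow_neg hb.le, rpow_add_one two_ne_zero]
  have : 0 < b ^ (μ + 1) := by positivity
  have : 0 < (2 : ℝ) ^ μ := by positivity
  field_simp

lemma integral_mul_besselJTerm_comp_mul (hν : -1 < ν) (hμ : -1 < μ) (hb : 0 < b) (n : ℕ) :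
    ∫ x in Ioo 0 1, x ^ (ν + 1) * (1 - x ^ 2) ^ μ * besselJTerm ν (b * x) n
      = 2 ^ μ * Gamma (μ + 1) * b ^ (-(μ + 1)) * besselJTerm (ν + μ + 1) b n := by
  have hn := natCast_add_add_one_pos hν n
  rw [setIntegral_congr_fun measurableSet_Ioo (mul_besselJTerm_comp_mul_eqOn hb.le n),
    integral_const_mul, integral_rpow_mul_one_sub_sq_rpow hn hμ]
  have hsplit : (b / 2) ^ (2 * (n : ℝ) + (ν + μ + 1))
      = (b / 2) ^ (2 * (n : ℝ) + ν) * (b / 2) ^ (μ + 1) := by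
    rw [← rpow_add (by positivity)]
    ring_nf
  have hΓ : Gamma ((n : ℝ) + ν + 1) ≠ 0 := (Gamma_pos_of_pos hn).ne'
  have hΓ' : Gamma ((n : ℝ) + ν + 1 + μ + 1) ≠ 0 := (Gamma_pos_of_pos (by linarith)).ne'
  simp only [besselJTerm, hsplit, show (n : ℝ) + (ν + μ + 1) + 1 = n + ν + 1 + μ + 1 by ring]
  calc _ = (-1) ^ n * (b / 2) ^ (2 * (n : ℝ) + ν) * Gamma (μ + 1)
        / (n.factorial * Gamma ((n : ℝ) + ν + 1 + μ + 1)) * (1 / 2) := by field_simp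
    _ = _ := by rw [← two_rpow_mul_rpow_neg_mul_half_rpow hb μ]; ring

lemma integral_norm_mul_besselJTerm_comp_mul (hν : -1 < ν) (hμ : -1 < μ) (hb : 0 < b) (n : ℕ) :
    ∫ x in Ioo 0 1, ‖x ^ (ν + 1) * (1 - x ^ 2) ^ μ * besselJTerm ν (b * x) n‖
      = 2 ^ μ * Gamma (μ + 1) * b ^ (-(μ + 1)) * ‖besselJTerm (ν + μ + 1) b n‖ := by
  have hsign : EqOn (fun x => ‖x ^ (ν + 1) * (1 - x ^ 2) ^ μ * besselJTerm ν (b * x) n‖)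
      (fun x => (-1) ^ n * (x ^ (ν + 1) * (1 - x ^ 2) ^ μ * besselJTerm ν (b * x) n))
      (Ioo 0 1) := by
    intro x ⟨hx0, hx1⟩
    have hx2 : 0 < 1 - x ^ 2 := by nlinarith
    simp only [norm_mul, norm_besselJTerm hν (mul_pos hb hx0),
      Real.norm_of_nonneg (rpow_nonneg hx0.le _), Real.norm_of_nonneg (rpow_nonneg hx2.le _)]
    ring
  rw [setIntegral_congr_fun measurableSet_Ioo hsign, integral_const_mul,
    integral_mul_besselJTerm_comp_mul hν hμ hb, norm_besselJTerm (by linarith) hb]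
  ring

end BesselTerms

theorem bessel_weber_schafheitlin_integral (ν μ b : ℝ) (hν : -1 < ν) (hμ : -1 < μ) (hb : 0 < b) :
    ∫ x in Set.Ioo (0:ℝ) 1, x ^ (ν + 1) * (1 - x ^ 2) ^ μ * besselJ ν (b * x)
      = 2 ^ μ * Real.Gamma (μ + 1) * b ^ (-(μ + 1)) * besselJ (ν + μ + 1) b := by
  have hsummable : Summable fun n => ∫ x in Ioo 0 1,
      ‖x ^ (ν + 1) * (1 - x ^ 2) ^ μ * besselJTerm ν (b * x) n‖ := by
    simp only [integral_norm_mul_besselJTerm_comp_mul hν hμ hb]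
    exact (summable_norm_besselJTerm hb).mul_left _
  simp only [besselJ_eq_tsum_besselJTerm, ← tsum_mul_left]
  rw [← integral_tsum_of_summable_integral_norm
    (integrableOn_mul_besselJTerm_comp_mul hν hμ hb.le) hsummable]
  exact tsum_congr (integral_mul_besselJTerm_comp_mul hν hμ hb)
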